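/- arXiv:0906.3452 — 3 statements merged into one kernel-verified Lean document; each statement's English description precedes it below -/
import Mathlib

section
/- If S is a C³ solution of S'' = S - ρ on [0,L] with S'(0) = S'(L) = 0 for ρ ∈ C¹, then ∫₀^L (S - ρ̄)² + 2(S')² + (S'')² dx = ∫₀^L (ρ - ρ̄)² dx, where ρ̄ = (1/L)∫₀^L ρ dx. -/
/-!
Since `S'' = S - ρ`, the right-hand integrand is `((S - ρ̄) - S'')²`, which differs from the
left-hand one by `-2 (S'² + (S - ρ̄) S'') = -2 ((S - ρ̄) S')'`. This is an exact derivative whose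
boundary terms vanish by the Neumann conditions.
-/

open Set Interval intervalIntegral

section NeumannEnergy

variable {a b : ℝ} {S S' S'' : ℝ → ℝ}

theorem integral_deriv_mul_self_add_sub_mul_deriv_eq_zero
    (hS : ∀ x ∈ [[a, b]], HasDerivAt S (S' x) x) (hS' : ∀ x ∈ [[a, b]], HasDerivAt S' (S'' x) x)
    (hS''c : ContinuousOn S'' [[a, b]]) (ha : S' a = 0) (hb : S' b = 0) (c : ℝ) :
    ∫ x in a..b, (S' x * S' x + (S x - c) * S'' x) = 0 := by
  have hS'c : ContinuousOn S' [[a, b]] :=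
    continuousOn_of_forall_continuousAt fun x hx ↦ (hS' x hx).continuousAt
  rw [integral_deriv_mul_eq_sub (fun x hx ↦ (hS x hx).sub_const c) hS'
    hS'c.intervalIntegrable hS''c.intervalIntegrable, ha, hb]
  ring

theorem integral_sub_sq_add_two_deriv_sq_add_sq_eq
    (hS : ∀ x ∈ [[a, b]], HasDerivAt S (S' x) x) (hS' : ∀ x ∈ [[a, b]], HasDerivAt S' (S'' x) x)
    (hS''c : ContinuousOn S'' [[a, b]]) (ha : S' a = 0) (hb : S' b = 0) (c : ℝ) :
    ∫ x in a..b, ((S x - c) ^ 2 + 2 * S' x ^ 2 + S'' x ^ 2) = ∫ x in a..b, (S x - c - S'' x) ^ 2 := by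
  have hSc : ContinuousOn S [[a, b]] :=
    continuousOn_of_forall_continuousAt fun x hx ↦ (hS x hx).continuousAt
  have hS'c : ContinuousOn S' [[a, b]] :=
    continuousOn_of_forall_continuousAt fun x hx ↦ (hS' x hx).continuousAt
  have hflux := integral_deriv_mul_self_add_sub_mul_deriv_eq_zero hS hS' hS''c ha hb c
  calc ∫ x in a..b, ((S x - c) ^ 2 + 2 * S' x ^ 2 + S'' x ^ 2)
      = ∫ x in a..b, ((S x - c - S'' x) ^ 2 + 2 * (S' x * S' x + (S x - c) * S'' x)) :=
        integral_congr fun x _ ↦ by ring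
    _ = (∫ x in a..b, (S x - c - S'' x) ^ 2)
          + 2 * ∫ x in a..b, (S' x * S' x + (S x - c) * S'' x) := by
        rw [integral_add, integral_const_mul]
        · exact ((hSc.sub continuousOn_const).sub hS''c).pow 2 |>.intervalIntegrable
        · exact (continuousOn_const.mul ((hS'c.mul hS'c).add
            ((hSc.sub continuousOn_const).mul hS''c))).intervalIntegrable
    _ = ∫ x in a..b, (S x - c - S'' x) ^ 2 := by rw [hflux, mul_zero, add_zero]

end NeumannEnergy

theorem energy_identity_H2_general (L : ℝ) (hL : 0 < L) (ρ S S' S'' S''' : ℝ → ℝ)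
    (hS1 : ∀ x ∈ Set.Icc (0:ℝ) L, HasDerivAt S (S' x) x)
    (hS2 : ∀ x ∈ Set.Icc (0:ℝ) L, HasDerivAt S' (S'' x) x)
    (hS3 : ∀ x ∈ Set.Icc (0:ℝ) L, HasDerivAt S'' (S''' x) x)
    (heq : ∀ x ∈ Set.Icc (0:ℝ) L, S'' x = S x - ρ x)
    (hS'0 : S' 0 = 0) (hS'L : S' L = 0)
    (ρbar : ℝ) :
    (∫ x in (0:ℝ)..L, ((S x - ρbar)^2 + 2*(S' x)^2 + (S'' x)^2))
      = ∫ x in (0:ℝ)..L, (ρ x - ρbar)^2 := by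
  rw [← uIcc_of_le hL.le] at hS1 hS2 hS3 heq
  have hS''c : ContinuousOn S'' [[0, L]] :=
    continuousOn_of_forall_continuousAt fun x hx ↦ (hS3 x hx).continuousAt
  rw [integral_sub_sq_add_two_deriv_sq_add_sq_eq hS1 hS2 hS''c hS'0 hS'L ρbar]
  exact integral_congr fun x hx ↦ by rw [heq x hx]; ring

/-- H²-energy identity: for a C³ solution of S'' = S - ρ on [0,L] with Neumann
conditions, ∫ (S-ρ̄)² + 2(S')² + (S'')² = ∫ (ρ-ρ̄)². -/
theorem energy_identity_H2 (L : ℝ) (hL : 0 < L) (ρ ρ' S S' S'' S''' : ℝ → ℝ)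
    (hρ' : ∀ x ∈ Set.Icc (0:ℝ) L, HasDerivAt ρ (ρ' x) x)
    (hρ'c : ContinuousOn ρ' (Set.Icc (0:ℝ) L))
    (hS1 : ∀ x ∈ Set.Icc (0:ℝ) L, HasDerivAt S (S' x) x)
    (hS2 : ∀ x ∈ Set.Icc (0:ℝ) L, HasDerivAt S' (S'' x) x)
    (hS3 : ∀ x ∈ Set.Icc (0:ℝ) L, HasDerivAt S'' (S''' x) x)
    (hS3c : ContinuousOn S''' (Set.Icc (0:ℝ) L))
    (heq : ∀ x ∈ Set.Icc (0:ℝ) L, S'' x = S x - ρ x)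
    (hS'0 : S' 0 = 0) (hS'L : S' L = 0)
    (ρbar : ℝ) (hbar : ρbar = (1/L) * ∫ x in (0:ℝ)..L, ρ x) :
    (∫ x in (0:ℝ)..L, ((S x - ρbar)^2 + 2*(S' x)^2 + (S'' x)^2))
      = ∫ x in (0:ℝ)..L, (ρ x - ρbar)^2 :=
  energy_identity_H2_general L hL ρ S S' S'' S''' hS1 hS2 hS3 heq hS'0 hS'L ρbar
end

section
/- If S is a C⁴ solution of S'' = S - ρ on [0,L] with S'(0) = S'(L) = 0 and ρ ∈ C²([0,L]), then ∫₀^L (S')² + 2(S'')² + (S''')² dx = ∫₀^L (ρ')² dx. -/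
/-!
Differentiating the equation gives `S''' = S' - ρ'` on `[0, L]`, hence
`(S')² + 2(S'')² + (S''')² - (ρ')² = 2((S'')² + S' S''') = 2 (S' S'')'`,
whose integral vanishes by the Neumann conditions `S'(0) = S'(L) = 0`.
-/

open Set MeasureTheory intervalIntegral

theorem UniqueDiffWithinAt.eq_deriv_of_eqOn {𝕜 F : Type*} [NontriviallyNormedField 𝕜]
    [NormedAddCommGroup F] [NormedSpace 𝕜 F] {f g : 𝕜 → F} {f' g' : F} {s : Set 𝕜} {x : 𝕜}
    (hs : UniqueDiffWithinAt 𝕜 s x) (hfg : EqOn f g s) (hx : x ∈ s)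
    (hf : HasDerivAt f f' x) (hg : HasDerivWithinAt g g' s x) : f' = g' :=
  hs.eq_deriv s hf.hasDerivWithinAt (hg.congr hfg (hfg hx))

theorem energy_identity_H3_general (L : ℝ) (hL : 0 < L) (ρ ρ' ρ'' S S' S'' S''' : ℝ → ℝ)
    (hρ1 : ∀ x ∈ Set.Icc (0:ℝ) L, HasDerivAt ρ (ρ' x) x)
    (hρ2 : ∀ x ∈ Set.Icc (0:ℝ) L, HasDerivAt ρ' (ρ'' x) x)
    (hS1 : ∀ x ∈ Set.Icc (0:ℝ) L, HasDerivAt S (S' x) x)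
    (hS2 : ∀ x ∈ Set.Icc (0:ℝ) L, HasDerivAt S' (S'' x) x)
    (hS3 : ∀ x ∈ Set.Icc (0:ℝ) L, HasDerivAt S'' (S''' x) x)
    (heq : ∀ x ∈ Set.Icc (0:ℝ) L, S'' x = S x - ρ x)
    (hS'0 : S' 0 = 0) (hS'L : S' L = 0) :
    (∫ x in (0:ℝ)..L, ((S' x)^2 + 2*(S'' x)^2 + (S''' x)^2))
      = ∫ x in (0:ℝ)..L, (ρ' x)^2 := by
  have hIcc : uIcc 0 L = Icc 0 L := uIcc_of_le hL.le
  -- Differentiating `S'' = S - ρ` within `[0, L]` covers the endpoints too.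
  have hS''' : EqOn S''' (S' - ρ') (Icc 0 L) := fun x hx =>
    (uniqueDiffOn_Icc hL x hx).eq_deriv_of_eqOn heq hx (hS3 x hx)
      ((hS1 x hx).sub (hρ1 x hx)).hasDerivWithinAt
  have cS' := HasDerivAt.continuousOn hS2
  have cS'' := HasDerivAt.continuousOn hS3
  have cρ' := HasDerivAt.continuousOn hρ2
  have cS''' : ContinuousOn S''' (Icc 0 L) := (cS'.sub cρ').congr hS'''
  have hparts : ∫ x in (0:ℝ)..L, S'' x * S'' x + S' x * S''' x = 0 := by
    rw [integral_deriv_mul_eq_sub (hIcc ▸ hS2) (hIcc ▸ hS3)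
      (cS''.intervalIntegrable_of_Icc hL.le) (cS'''.intervalIntegrable_of_Icc hL.le),
      hS'0, hS'L]
    ring
  have hparts_int : IntervalIntegrable (fun x => S'' x * S'' x + S' x * S''' x) volume 0 L :=
    ((cS''.mul cS'').add (cS'.mul cS''')).intervalIntegrable_of_Icc hL.le
  calc (∫ x in (0:ℝ)..L, ((S' x)^2 + 2*(S'' x)^2 + (S''' x)^2))
      = ∫ x in (0:ℝ)..L, ((ρ' x)^2 + 2 * (S'' x * S'' x + S' x * S''' x)) :=
        integral_congr fun x hx => by
          simp only [hS''' (hIcc ▸ hx), Pi.sub_apply]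
          ring
    _ = ∫ x in (0:ℝ)..L, (ρ' x)^2 := by
        have hρ'sq : IntervalIntegrable (fun x => ρ' x ^ 2) volume 0 L :=
          (cρ'.pow 2).intervalIntegrable_of_Icc hL.le
        rw [integral_add hρ'sq (hparts_int.const_mul 2),
          intervalIntegral.integral_const_mul, hparts, mul_zero, add_zero]

/-- H³-energy identity: for a C⁴ solution of S'' = S - ρ on [0,L] with Neumann
conditions and ρ ∈ C², ∫ (S')² + 2(S'')² + (S''')² = ∫ (ρ')². -/
theorem energy_identity_H3 (L : ℝ) (hL : 0 < L) (ρ ρ' ρ'' S S' S'' S''' S'''' : ℝ → ℝ)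
    (hρ1 : ∀ x ∈ Set.Icc (0:ℝ) L, HasDerivAt ρ (ρ' x) x)
    (hρ2 : ∀ x ∈ Set.Icc (0:ℝ) L, HasDerivAt ρ' (ρ'' x) x)
    (hρ2c : ContinuousOn ρ'' (Set.Icc (0:ℝ) L))
    (hS1 : ∀ x ∈ Set.Icc (0:ℝ) L, HasDerivAt S (S' x) x)
    (hS2 : ∀ x ∈ Set.Icc (0:ℝ) L, HasDerivAt S' (S'' x) x)
    (hS3 : ∀ x ∈ Set.Icc (0:ℝ) L, HasDerivAt S'' (S''' x) x)
    (hS4 : ∀ x ∈ Set.Icc (0:ℝ) L, HasDerivAt S''' (S'''' x) x)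
    (hS4c : ContinuousOn S'''' (Set.Icc (0:ℝ) L))
    (heq : ∀ x ∈ Set.Icc (0:ℝ) L, S'' x = S x - ρ x)
    (hS'0 : S' 0 = 0) (hS'L : S' L = 0) :
    (∫ x in (0:ℝ)..L, ((S' x)^2 + 2*(S'' x)^2 + (S''' x)^2))
      = ∫ x in (0:ℝ)..L, (ρ' x)^2 :=
  energy_identity_H3_general L hL ρ ρ' ρ'' S S' S'' S''' hρ1 hρ2 hS1 hS2 hS3 heq hS'0 hS'L
end

section
/- Under the hypotheses of the two energy identities for S'' = S - ρ with Neumann conditions, one has ‖S'‖_{L²(0,L)} ≤ min{1, √(L/2)} · ‖ρ'‖_{L²(0,L)}. -/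
open intervalIntegral Set

set_option maxHeartbeats 1000000

/-- Cauchy–Schwarz for interval integrals of continuous functions. -/
lemma cs_integral {a b : ℝ} (hab : a ≤ b) {f g : ℝ → ℝ}
    (hf : ContinuousOn f (Set.Icc a b)) (hg : ContinuousOn g (Set.Icc a b)) :
    (∫ x in a..b, f x * g x)^2 ≤ (∫ x in a..b, (f x)^2) * (∫ x in a..b, (g x)^2) := by
  have huIcc : Set.uIcc a b = Set.Icc a b := Set.uIcc_of_le hab
  have hif : IntervalIntegrable (fun x => (f x)^2) MeasureTheory.volume a b := by
    apply ContinuousOn.intervalIntegrable; rw [huIcc]; exact hf.pow 2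
  have hig : IntervalIntegrable (fun x => (g x)^2) MeasureTheory.volume a b := by
    apply ContinuousOn.intervalIntegrable; rw [huIcc]; exact hg.pow 2
  have hifg : IntervalIntegrable (fun x => f x * g x) MeasureTheory.volume a b := by
    apply ContinuousOn.intervalIntegrable; rw [huIcc]; exact hf.mul hg
  set A := ∫ x in a..b, (f x)^2 with hA
  set B := ∫ x in a..b, (g x)^2 with hB
  set M := ∫ x in a..b, f x * g x with hM
  have key : ∀ t : ℝ, 0 ≤ B * (t * t) + (-2 * M) * t + A := by
    intro t
    have h1 : (∫ x in a..b, (f x - t * g x)^2)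
        = A - 2 * t * M + t^2 * B := by
      have hexp : ∀ x : ℝ, (f x - t * g x)^2
          = (f x)^2 - (2 * t) * (f x * g x) + t^2 * (g x)^2 := by intro x; ring
      rw [intervalIntegral.integral_congr (g := fun x =>
        (f x)^2 - (2 * t) * (f x * g x) + t^2 * (g x)^2) (fun x _ => hexp x)]
      rw [intervalIntegral.integral_add ((hif.sub (hifg.const_mul _))) (hig.const_mul _),
        intervalIntegral.integral_sub hif (hifg.const_mul _),
        intervalIntegral.integral_const_mul, intervalIntegral.integral_const_mul]
    have h0 : 0 ≤ ∫ x in a..b, (f x - t * g x)^2 :=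
      intervalIntegral.integral_nonneg hab (fun u _ => sq_nonneg _)
    nlinarith [h0, h1]
  have := discrim_le_zero key
  rw [discrim] at this
  nlinarith [this]

/-- Under the hypotheses of the energy identities for S'' = S - ρ with Neumann
conditions, ‖S'‖₂ ≤ min{1, √(L/2)}·‖ρ'‖₂. -/
theorem gradient_estimate (L : ℝ) (hL : 0 < L) (ρ ρ' ρ'' S S' S'' S''' S'''' : ℝ → ℝ)
    (hρ1 : ∀ x ∈ Set.Icc (0:ℝ) L, HasDerivAt ρ (ρ' x) x)
    (hρ2 : ∀ x ∈ Set.Icc (0:ℝ) L, HasDerivAt ρ' (ρ'' x) x)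
    (hρ2c : ContinuousOn ρ'' (Set.Icc (0:ℝ) L))
    (hS1 : ∀ x ∈ Set.Icc (0:ℝ) L, HasDerivAt S (S' x) x)
    (hS2 : ∀ x ∈ Set.Icc (0:ℝ) L, HasDerivAt S' (S'' x) x)
    (hS3 : ∀ x ∈ Set.Icc (0:ℝ) L, HasDerivAt S'' (S''' x) x)
    (hS4 : ∀ x ∈ Set.Icc (0:ℝ) L, HasDerivAt S''' (S'''' x) x)
    (hS4c : ContinuousOn S'''' (Set.Icc (0:ℝ) L))
    (heq : ∀ x ∈ Set.Icc (0:ℝ) L, S'' x = S x - ρ x)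
    (hS'0 : S' 0 = 0) (hS'L : S' L = 0) :
    Real.sqrt (∫ x in (0:ℝ)..L, (S' x)^2)
      ≤ min 1 (Real.sqrt (L/2)) * Real.sqrt (∫ x in (0:ℝ)..L, (ρ' x)^2) := by
  have hL0 : (0:ℝ) ≤ L := hL.le
  have huIcc : Set.uIcc (0:ℝ) L = Set.Icc (0:ℝ) L := Set.uIcc_of_le hL0
  -- continuity facts
  have hS'c : ContinuousOn S' (Set.Icc (0:ℝ) L) :=
    fun x hx => (hS2 x hx).continuousAt.continuousWithinAt
  have hS''c : ContinuousOn S'' (Set.Icc (0:ℝ) L) :=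
    fun x hx => (hS3 x hx).continuousAt.continuousWithinAt
  have hS'''c : ContinuousOn S''' (Set.Icc (0:ℝ) L) :=
    fun x hx => (hS4 x hx).continuousAt.continuousWithinAt
  have hρ'c : ContinuousOn ρ' (Set.Icc (0:ℝ) L) :=
    fun x hx => (hρ2 x hx).continuousAt.continuousWithinAt
  -- S''' = S' - ρ' on [0, L]
  have h3 : ∀ x ∈ Set.Icc (0:ℝ) L, S''' x = S' x - ρ' x := by
    intro x hx
    have hg : HasDerivWithinAt (fun y => S'' y - (S y - ρ y))
        (S''' x - (S' x - ρ' x)) (Set.Icc (0:ℝ) L) x :=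
      (((hS3 x hx).sub ((hS1 x hx).sub (hρ1 x hx)))).hasDerivWithinAt
    have hEq : Set.EqOn (fun y => S'' y - (S y - ρ y)) (fun _ => (0:ℝ))
        (Set.Icc (0:ℝ) L) := fun y hy => by simp [heq y hy]
    have hzero : HasDerivWithinAt (fun y => S'' y - (S y - ρ y)) 0 (Set.Icc (0:ℝ) L) x :=
      (hasDerivWithinAt_const x _ (0:ℝ)).congr hEq (hEq hx)
    have hu : UniqueDiffWithinAt ℝ (Set.Icc (0:ℝ) L) x := (uniqueDiffOn_Icc hL) x hx
    have h := hu.eq_deriv _ hg hzero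
    linarith [h]
  -- integrability
  have hiS'2 : IntervalIntegrable (fun x => (S' x)^2) MeasureTheory.volume 0 L := by
    apply ContinuousOn.intervalIntegrable; rw [huIcc]; exact hS'c.pow 2
  have hiS''2 : IntervalIntegrable (fun x => (S'' x)^2) MeasureTheory.volume 0 L := by
    apply ContinuousOn.intervalIntegrable; rw [huIcc]; exact hS''c.pow 2
  have hiS'ρ' : IntervalIntegrable (fun x => S' x * ρ' x) MeasureTheory.volume 0 L := by
    apply ContinuousOn.intervalIntegrable; rw [huIcc]; exact hS'c.mul hρ'c
  set A := ∫ x in (0:ℝ)..L, (S' x)^2 with hAdef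
  set B := ∫ x in (0:ℝ)..L, (S'' x)^2 with hBdef
  set C := ∫ x in (0:ℝ)..L, (ρ' x)^2 with hCdef
  set M := ∫ x in (0:ℝ)..L, S' x * ρ' x with hMdef
  -- energy identity: A + B = M
  have ftc : (∫ x in (0:ℝ)..L, (S'' x * S'' x + S' x * S''' x))
      = S' L * S'' L - S' 0 * S'' 0 := by
    apply intervalIntegral.integral_eq_sub_of_hasDerivAt
    · intro x hx
      rw [huIcc] at hx
      exact (hS2 x hx).mul (hS3 x hx)
    · apply ContinuousOn.intervalIntegrable; rw [huIcc]
      exact (hS''c.mul hS''c).add (hS'c.mul hS'''c)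
  have hsplit : (∫ x in (0:ℝ)..L, (S'' x * S'' x + S' x * S''' x))
      = B + (A - M) := by
    rw [intervalIntegral.integral_congr (g := fun x =>
        (S'' x)^2 + ((S' x)^2 - S' x * ρ' x)) ?_]
    · rw [intervalIntegral.integral_add hiS''2 (hiS'2.sub hiS'ρ'),
        intervalIntegral.integral_sub hiS'2 hiS'ρ']
    · intro x hx
      rw [huIcc] at hx
      have := h3 x hx
      simp only
      rw [this]; ring
  have henergy : A + B = M := by
    rw [hsplit] at ftc
    rw [hS'0, hS'L] at ftc
    linarith [ftc]
  -- Poincaré: A ≤ L^2/2 * B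
  have hBnonneg : 0 ≤ B := intervalIntegral.integral_nonneg hL0 (fun u _ => sq_nonneg _)
  have hAnonneg : 0 ≤ A := intervalIntegral.integral_nonneg hL0 (fun u _ => sq_nonneg _)
  have hCnonneg : 0 ≤ C := intervalIntegral.integral_nonneg hL0 (fun u _ => sq_nonneg _)
  have hpoint : ∀ x ∈ Set.Icc (0:ℝ) L, (S' x)^2 ≤ x * B := by
    intro x hx
    obtain ⟨hx0, hxL⟩ := hx
    have hsub : Set.Icc (0:ℝ) x ⊆ Set.Icc (0:ℝ) L :=
      Set.Icc_subset_Icc le_rfl hxL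
    have hftc : (∫ t in (0:ℝ)..x, S'' t) = S' x - S' 0 := by
      apply intervalIntegral.integral_eq_sub_of_hasDerivAt
      · intro t ht
        rw [Set.uIcc_of_le hx0] at ht
        exact hS2 t (hsub ht)
      · apply ContinuousOn.intervalIntegrable; rw [Set.uIcc_of_le hx0]
        exact hS''c.mono hsub
    have hcs := cs_integral hx0 (f := S'') (g := fun _ => (1:ℝ))
      (hS''c.mono hsub) continuousOn_const
    have hone : (∫ t in (0:ℝ)..x, ((1:ℝ))^2) = x := by simp
    have hmono : (∫ t in (0:ℝ)..x, (S'' t)^2) ≤ B := by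
      rw [hBdef]
      apply intervalIntegral.integral_mono_interval le_rfl hx0 hxL
      · filter_upwards with t using sq_nonneg _
      · exact hiS''2
    have h1 : (S' x)^2 ≤ (∫ t in (0:ℝ)..x, (S'' t)^2) * x := by
      have : (∫ t in (0:ℝ)..x, S'' t * 1) = S' x := by
        simp only [mul_one]; rw [hftc, hS'0]; ring
      calc (S' x)^2 = (∫ t in (0:ℝ)..x, S'' t * 1)^2 := by rw [this]
        _ ≤ (∫ t in (0:ℝ)..x, (S'' t)^2) * (∫ t in (0:ℝ)..x, ((1:ℝ))^2) := hcs
        _ = (∫ t in (0:ℝ)..x, (S'' t)^2) * x := by rw [hone]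
    have hnn : 0 ≤ ∫ t in (0:ℝ)..x, (S'' t)^2 :=
      intervalIntegral.integral_nonneg hx0 (fun u _ => sq_nonneg _)
    nlinarith [h1, hmono, hx0, hnn]
  have hpoin : A ≤ L^2/2 * B := by
    have : A ≤ ∫ x in (0:ℝ)..L, x * B := by
      apply intervalIntegral.integral_mono_on hL0 hiS'2 _ hpoint
      exact (ContinuousOn.intervalIntegrable (by fun_prop))
    have hval : (∫ x in (0:ℝ)..L, x * B) = L^2/2 * B := by
      rw [intervalIntegral.integral_mul_const, integral_id]
      ring
    linarith [this, hval.symm.le]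
  -- Cauchy–Schwarz: M ≤ √A √C
  have hcsm : M^2 ≤ A * C := cs_integral hL0 hS'c hρ'c
  have hMle : M ≤ Real.sqrt A * Real.sqrt C := by
    have h1 : M ≤ |M| := le_abs_self M
    have h2 : |M| = Real.sqrt (M^2) := (Real.sqrt_sq_eq_abs M).symm
    have h3 : Real.sqrt (M^2) ≤ Real.sqrt (A * C) := Real.sqrt_le_sqrt hcsm
    rw [Real.sqrt_mul hAnonneg] at h3
    linarith
  -- combine
  set sA := Real.sqrt A with hsA
  set sC := Real.sqrt C with hsC
  have hsAnn : 0 ≤ sA := Real.sqrt_nonneg _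
  have hsCnn : 0 ≤ sC := Real.sqrt_nonneg _
  have hsA2 : sA^2 = A := Real.sq_sqrt hAnonneg
  have hkey : sA * (L^2 + 2) ≤ sC * L^2 := by
    -- from A*(L^2+2) ≤ sA*sC*L^2 and A = sA^2
    have h1 : A * (L^2 + 2) ≤ sA * sC * L^2 := by
      have hB2 : 2 * A ≤ L^2 * B := by nlinarith [hpoin]
      have : A + B ≤ sA * sC := by linarith [henergy, hMle]
      nlinarith [this, hB2, sq_nonneg L, hL]
    rcases eq_or_lt_of_le hsAnn with h0 | hpos
    · rw [← h0, zero_mul]; positivity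
    · have : sA * (sA * (L^2 + 2)) ≤ sA * (sC * L^2) := by nlinarith [h1, hsA2]
      exact le_of_mul_le_mul_left this hpos
  have hL22 : (0:ℝ) < L^2 + 2 := by positivity
  have h1 : sA ≤ 1 * sC := by nlinarith [hkey, hsCnn, hsAnn, mul_pos hL hL]
  have hs : L^2 ≤ Real.sqrt (L/2) * (L^2 + 2) := by
    have hnn : 0 ≤ Real.sqrt (L/2) * (L^2+2) := by positivity
    have hsq : (L^2)^2 ≤ (Real.sqrt (L/2) * (L^2+2))^2 := by
      rw [mul_pow, Real.sq_sqrt (by positivity : (0:ℝ) ≤ L/2)]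
      nlinarith [mul_nonneg hL.le (sq_nonneg (L*(L-1))), pow_nonneg hL.le 3, hL.le]
    calc L^2 = Real.sqrt ((L^2)^2) := (Real.sqrt_sq (by positivity)).symm
      _ ≤ Real.sqrt ((Real.sqrt (L/2) * (L^2+2))^2) := Real.sqrt_le_sqrt hsq
      _ = Real.sqrt (L/2) * (L^2+2) := Real.sqrt_sq hnn
  have h2 : sA ≤ Real.sqrt (L/2) * sC := by
    have hchain : sA * (L^2+2) ≤ Real.sqrt (L/2) * sC * (L^2+2) := by
      calc sA * (L^2+2) ≤ sC * L^2 := hkey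
        _ ≤ sC * (Real.sqrt (L/2) * (L^2+2)) := mul_le_mul_of_nonneg_left hs hsCnn
        _ = Real.sqrt (L/2) * sC * (L^2+2) := by ring
    exact le_of_mul_le_mul_right hchain hL22
  rcases le_total (1:ℝ) (Real.sqrt (L/2)) with h | h
  · rw [min_eq_left h]; exact h1
  · rw [min_eq_right h]; linarith [h2]
end
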